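/- Let g be a unitary automorphism of a hermitian space (V, h) over (E, σ) with characteristic polynomial Π_{i=1}^ℓ P_i^{a_i}, the P_i distinct monic irreducible, V_i = ker P_i^{a_i}(g), and let τ be the involution of indices with P_{τ(i)} = P_i*. Then: (i) if τ(i) = i, the restriction of h to V_i is nondegenerate and V_i is orthogonal to ⊕_{j ≠ i} V_j; (ii) if τ(i) = j ≠ i, then V_i and V_j are totally isotropic (h vanishes identically on each), V_i ⊕ V_j is orthogonal to V_k for every k ∉ {i, j}, and the restriction of h to V_i ⊕ V_j is nondegenerate. -/

import Mathlib

/-- `P*`: for monic `P` with nonzero constant term `b_d`, `P*(T) = σ(b_d)⁻¹ T^d P^σ(T⁻¹)`. -/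
noncomputable def pstar {k : Type*} [Field k] (σ : k →+* k) (P : Polynomial k) : Polynomial k :=
  Polynomial.C (σ (P.coeff 0))⁻¹ * (P.map σ).reverse

/-!
Unitarity makes `q^σ(g⁻¹)` the adjoint of `q(g)`, and `q^σ(g⁻¹) g^d` is the reversed polynomial
`(q^σ)^rev` evaluated at `g`; for `q = P_i^{a_i}` this reverse is a unit multiple of
`P_{τ(i)}^{a_i} = (P_i*)^{a_i}`. So `V_i = ker q(g)` is orthogonal to the image of
`P_{τ(i)}^{a_i}(g)`, which contains every `V_j` with `j ≠ τ(i)` by coprimality. By the primary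
decomposition `V = ∑ V_k`, a vector orthogonal to all the `V_k` vanishes, which gives both
nondegeneracy claims.
-/

open Function Polynomial

namespace Polynomial

theorem reverse_pow_of_domain {R : Type*} [Semiring R] [NoZeroDivisors R] (p : R[X]) (n : ℕ) :
    (p ^ n).reverse = p.reverse ^ n := by
  induction n with
  | zero => simpa using reverse_C (1 : R)
  | succ n ih => rw [pow_succ, pow_succ, reverse_mul_of_domain, ih]

theorem aeval_reflect_of_natDegree_le {R A : Type*} [CommSemiring R] [Semiring A] [Algebra R A]
    (u : Aˣ) {N : ℕ} {p : R[X]} (hp : p.natDegree ≤ N) :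
    aeval (u : A) (reflect N p) = aeval (↑u⁻¹ : A) p * ↑u ^ N := by
  refine induction_with_natDegree_le
    (fun p => aeval (u : A) (reflect N p) = aeval (↑u⁻¹ : A) p * ↑u ^ N) N (by simp) ?_ ?_ p hp
  · intro n r _ hn
    obtain ⟨k, rfl⟩ := Nat.exists_eq_add_of_le hn
    have hu : (↑u⁻¹ : A) ^ n * ↑u ^ (n + k) = ↑u ^ k := by
      rw [← Units.val_pow_eq_pow_val, ← Units.val_pow_eq_pow_val, ← Units.val_pow_eq_pow_val,
        ← Units.val_mul, pow_add, ← mul_assoc, inv_pow, inv_mul_cancel, one_mul]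
    simp only [reflect_C_mul_X_pow, revAt_le hn, Nat.add_sub_cancel_left, map_mul, aeval_C,
      map_pow, aeval_X, mul_assoc, hu]
  · intro p q _ _ hp hq
    simp only [reflect_add, map_add, hp, hq, add_mul]

theorem isCoprime_of_monic_of_irreducible {K : Type*} [Field K] {p q : K[X]} (hp : p.Monic)
    (hq : q.Monic) (hpi : Irreducible p) (hqi : Irreducible q) (hne : p ≠ q) : IsCoprime p q :=
  (dvd_or_isCoprime p q hpi).resolve_left fun hdvd =>
    hne (eq_of_monic_of_associated hp hq (hpi.associated_of_dvd hqi hdvd))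

theorem iSup_ker_aeval_eq_ker_aeval_prod {R M ι : Type*} [CommRing R] [AddCommGroup M]
    [Module R M] (f : Module.End R M) (s : Finset ι) {p : ι → R[X]}
    (hp : (s : Set ι).Pairwise (IsCoprime on p)) :
    ⨆ i ∈ s, LinearMap.ker (aeval f (p i)) = LinearMap.ker (aeval f (∏ i ∈ s, p i)) := by
  classical
  induction s using Finset.induction_on with
  | empty => simp [Module.End.one_eq_id]
  | insert b s hb ih =>
    rw [Finset.coe_insert, Set.pairwise_insert] at hp
    rw [Finset.iSup_insert, Finset.prod_insert hb, ih hp.1,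
      sup_ker_aeval_eq_ker_aeval_mul_of_coprime]
    exact IsCoprime.prod_right fun i hi => (hp.2 i hi fun h => hb (h ▸ hi)).1

theorem iSup_ker_aeval_eq_top_of_charpoly_eq_prod {R M ι : Type*} [CommRing R] [AddCommGroup M]
    [Module R M] [Module.Free R M] [Module.Finite R M] [Fintype ι] (f : Module.End R M)
    {p : ι → R[X]} (hp : Pairwise (IsCoprime on p)) (hf : f.charpoly = ∏ i, p i) :
    ⨆ i, LinearMap.ker (aeval f (p i)) = ⊤ := by
  have := iSup_ker_aeval_eq_ker_aeval_prod f Finset.univ (hp.set_pairwise _)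
  simpa [← hf, LinearMap.aeval_self_charpoly] using this

end Polynomial

theorem isCoprime_reverse_map_pow_iff {k : Type*} [Field k] (σ : k →+* k) {P : k[X]}
    (hP : pstar σ P ≠ 0) (p : k[X]) (n : ℕ) :
    IsCoprime p ((P ^ n).map σ).reverse ↔ IsCoprime p (pstar σ P ^ n) := by
  have h0 : σ (P.coeff 0) ≠ 0 := fun h0 => hP (by simp [pstar, h0])
  have hrev : (P.map σ).reverse = C (σ (P.coeff 0)) * pstar σ P := by
    rw [pstar, ← mul_assoc, ← C_mul, mul_inv_cancel₀ h0, C_1, one_mul]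
  rw [Polynomial.map_pow, reverse_pow_of_domain, hrev, mul_pow,
    isCoprime_mul_unit_left_right ((isUnit_C.mpr h0.isUnit).pow n)]

section Sesquilinear

variable {E V : Type*} [Field E] [AddCommGroup V] [Module E V] {σ : E →+* E}
  (h : V →ₗ[E] V →ₛₗ[σ] E)

theorem apply_aeval_eq_apply_aeval_map_of_adjoint (hσ : ∀ x, σ (σ x) = x)
    {A B : Module.End E V} (hAB : ∀ x y, h (A x) y = h x (B y)) (q : E[X]) (x y : V) :
    h (aeval A q x) y = h x (aeval B (q.map σ) y) := by
  have hpow : ∀ n x, h ((A ^ n) x) y = h x ((B ^ n) y) := by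
    intro n
    induction n with
    | zero => simp
    | succ n ih => intro x; rw [pow_succ, Module.End.mul_apply, ih, hAB, pow_succ',
        Module.End.mul_apply]
  induction q using Polynomial.induction_on' with
  | add p q hp hq => simp only [Polynomial.map_add, map_add, LinearMap.add_apply, hp, hq]
  | monomial n c =>
    simp only [Polynomial.map_monomial, aeval_monomial, Module.End.mul_apply,
      Module.algebraMap_end_apply, map_smul, LinearMap.smul_apply, LinearMap.map_smulₛₗ, hσ,
      smul_eq_mul, hpow]

theorem apply_eq_zero_of_isCoprime_reverse_map (hσ : ∀ x, σ (σ x) = x) {g : V ≃ₗ[E] V}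
    (hg : ∀ x y, h (g x) (g y) = h x y) {p q : E[X]} (hpq : IsCoprime p (q.map σ).reverse)
    {x y : V} (hx : x ∈ LinearMap.ker (aeval g.toLinearMap q))
    (hy : y ∈ LinearMap.ker (aeval g.toLinearMap p)) : h x y = 0 := by
  obtain ⟨a, b, hab⟩ := hpq
  have hreflect : aeval g.toLinearMap (q.map σ).reverse =
      aeval g.symm.toLinearMap (q.map σ) * g.toLinearMap ^ (q.map σ).natDegree :=
    aeval_reflect_of_natDegree_le (LinearMap.GeneralLinearGroup.ofLinearEquiv g) le_rfl
  have hy' : y = aeval g.symm.toLinearMap (q.map σ)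
      ((g.toLinearMap ^ (q.map σ).natDegree) (aeval g.toLinearMap b y)) := by
    calc y = aeval g.toLinearMap (a * p + b * (q.map σ).reverse) y := by simp [hab]
      _ = _ := by
        rw [mul_comm b, map_add, map_mul, map_mul, hreflect, LinearMap.add_apply,
          Module.End.mul_apply, LinearMap.mem_ker.mp hy, map_zero, zero_add]
        rfl
  have hadj : ∀ x y, h (g x) y = h x (g.symm y) := fun x y => by
    simpa using hg x (g.symm y)
  rw [hy', ← apply_aeval_eq_apply_aeval_map_of_adjoint h hσ hadj, LinearMap.mem_ker.mp hx,
    map_zero, LinearMap.zero_apply]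

theorem apply_eq_zero_of_mem_sup {U U' W : Submodule E V}
    (hU : ∀ x ∈ U, ∀ y ∈ W, h x y = 0) (hU' : ∀ x ∈ U', ∀ y ∈ W, h x y = 0) :
    ∀ x ∈ U ⊔ U', ∀ y ∈ W, h x y = 0 := by
  intro x hx y hy
  obtain ⟨x₁, hx₁, x₂, hx₂, rfl⟩ := Submodule.mem_sup.mp hx
  rw [map_add, LinearMap.add_apply, hU x₁ hx₁ y hy, hU' x₂ hx₂ y hy, add_zero]

theorem eq_zero_of_forall_apply_eq_zero_of_iSup_eq_top
    (h_nondeg : ∀ x : V, (∀ y : V, h x y = 0) → x = 0) {ι : Type*} {W : ι → Submodule E V}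
    (hW : ⨆ i, W i = ⊤) {x : V} (hx : ∀ i, ∀ y ∈ W i, h x y = 0) : x = 0 := by
  refine h_nondeg x fun y => ?_
  have hle : ⨆ i, W i ≤ LinearMap.ker (h x) := iSup_le fun i y hy => hx i y hy
  exact hle (hW ▸ Submodule.mem_top)

end Sesquilinear

theorem stmt10 {E : Type*} [Field E] (σ : E →+* E) (hσ : ∀ x, σ (σ x) = x)
    {V : Type*} [AddCommGroup V] [Module E V] [FiniteDimensional E V]
    (h : V →ₗ[E] V →ₛₗ[σ] E)
    (h_nondeg : ∀ x : V, (∀ y : V, h x y = 0) → x = 0)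
    (g : V ≃ₗ[E] V) (hg : ∀ x y : V, h (g x) (g y) = h x y)
    (ℓ : ℕ) (P : Fin ℓ → Polynomial E) (a : Fin ℓ → ℕ)
    (hPmonic : ∀ i, (P i).Monic) (hPirr : ∀ i, Irreducible (P i))
    (hPinj : Function.Injective P)
    (hfac : LinearMap.charpoly g.toLinearMap = ∏ i, P i ^ a i)
    (t : Fin ℓ → Fin ℓ) (ht : ∀ i, t (t i) = i)
    (htP : ∀ i, P (t i) = pstar σ (P i)) (hta : ∀ i, a (t i) = a i) :
    (∀ i : Fin ℓ, t i = i →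
      ((∀ x ∈ LinearMap.ker (Polynomial.aeval g.toLinearMap (P i ^ a i)),
          (∀ y ∈ LinearMap.ker (Polynomial.aeval g.toLinearMap (P i ^ a i)), h x y = 0) →
          x = 0) ∧
       (∀ j : Fin ℓ, j ≠ i →
          ∀ x ∈ LinearMap.ker (Polynomial.aeval g.toLinearMap (P i ^ a i)),
            ∀ y ∈ LinearMap.ker (Polynomial.aeval g.toLinearMap (P j ^ a j)), h x y = 0))) ∧
    (∀ i j : Fin ℓ, t i = j → j ≠ i →
      ((∀ x ∈ LinearMap.ker (Polynomial.aeval g.toLinearMap (P i ^ a i)),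
          ∀ y ∈ LinearMap.ker (Polynomial.aeval g.toLinearMap (P i ^ a i)), h x y = 0) ∧
       (∀ x ∈ LinearMap.ker (Polynomial.aeval g.toLinearMap (P j ^ a j)),
          ∀ y ∈ LinearMap.ker (Polynomial.aeval g.toLinearMap (P j ^ a j)), h x y = 0) ∧
       (∀ k : Fin ℓ, k ≠ i → k ≠ j →
          ∀ x ∈ (LinearMap.ker (Polynomial.aeval g.toLinearMap (P i ^ a i)) ⊔
                 LinearMap.ker (Polynomial.aeval g.toLinearMap (P j ^ a j))),
            ∀ y ∈ LinearMap.ker (Polynomial.aeval g.toLinearMap (P k ^ a k)), h x y = 0) ∧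
       (∀ x ∈ (LinearMap.ker (Polynomial.aeval g.toLinearMap (P i ^ a i)) ⊔
               LinearMap.ker (Polynomial.aeval g.toLinearMap (P j ^ a j))),
          (∀ y ∈ (LinearMap.ker (Polynomial.aeval g.toLinearMap (P i ^ a i)) ⊔
                  LinearMap.ker (Polynomial.aeval g.toLinearMap (P j ^ a j))), h x y = 0) →
          x = 0))) := by
  have hcop : Pairwise (IsCoprime on fun k => P k ^ a k) := fun i j hij =>
    (isCoprime_of_monic_of_irreducible (hPmonic i) (hPmonic j) (hPirr i) (hPirr j)
      (hPinj.ne hij)).pow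
  have hortho : ∀ i j, t i ≠ j → ∀ x ∈ LinearMap.ker (aeval g.toLinearMap (P i ^ a i)),
      ∀ y ∈ LinearMap.ker (aeval g.toLinearMap (P j ^ a j)), h x y = 0 := by
    intro i j hij x hx y hy
    refine apply_eq_zero_of_isCoprime_reverse_map h hσ hg ?_ hx hy
    rw [isCoprime_reverse_map_pow_iff σ (htP i ▸ (hPmonic (t i)).ne_zero), ← htP, ← hta i]
    exact hcop hij.symm
  have htop : ⨆ k, LinearMap.ker (aeval g.toLinearMap (P k ^ a k)) = ⊤ :=
    iSup_ker_aeval_eq_top_of_charpoly_eq_prod g.toLinearMap hcop hfac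
  have hnondeg : ∀ x, (∀ k, ∀ y ∈ LinearMap.ker (aeval g.toLinearMap (P k ^ a k)), h x y = 0) →
      x = 0 := fun _ => eq_zero_of_forall_apply_eq_zero_of_iSup_eq_top h h_nondeg htop
  refine ⟨fun i hi => ⟨fun x hx hxx => hnondeg x fun k => ?_,
    fun j hji => hortho i j (hi.trans_ne hji.symm)⟩, fun i j hij hji => ?_⟩
  · rcases eq_or_ne k i with rfl | hki
    · exact hxx
    · exact hortho i k (hi.trans_ne hki.symm) x hx
  have htj : t j = i := hij ▸ ht i
  have hsup : ∀ k, k ≠ i → k ≠ j → ∀ x ∈ LinearMap.ker (aeval g.toLinearMap (P i ^ a i)) ⊔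
      LinearMap.ker (aeval g.toLinearMap (P j ^ a j)),
      ∀ y ∈ LinearMap.ker (aeval g.toLinearMap (P k ^ a k)), h x y = 0 := fun k hki hkj =>
    apply_eq_zero_of_mem_sup h (hortho i k (hij.trans_ne hkj.symm))
      (hortho j k (htj.trans_ne hki.symm))
  refine ⟨hortho i i (hij.trans_ne hji), hortho j j (htj.trans_ne hji.symm), hsup,
    fun x hx hxx => hnondeg x fun k => ?_⟩
  rcases eq_or_ne k i with rfl | hki
  · exact fun y hy => hxx y (Submodule.mem_sup_left hy)
  rcases eq_or_ne k j with rfl | hkj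
  · exact fun y hy => hxx y (Submodule.mem_sup_right hy)
  exact hsup k hki hkj x hx
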